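/- With ${\mathbf v}^k = (\{d+1-k\}^k, \{-k\}^{d+1-k})$ and ${\mathbf v}^\circ$ as above, and $z_k({\mathbf t}) = {\mathsf{TC}}_{{\mathbf v}^k}({\mathbf t})$, one has $z_k({\mathbf t})\,{\mathsf{TS}}_{{\mathbf v}^\circ}({\mathbf t}) = \frac{k!(d+1-k)!}{(d+1)!}\,{\mathsf{TS}}_{{\mathbf v}^\circ + {\mathbf v}^k}({\mathbf t})$ for $1 \le k \le d$. -/

import Mathlib

open Real Complex

/-- The exponential `φ_k(t) = e^{2πi k·t/(d+1)}`. -/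
noncomputable def phiH (d : ℕ) (k : Fin (d + 1) → ℤ) (t : Fin (d + 1) → ℝ) : ℂ :=
  Complex.exp (2 * π * Complex.I / ((d : ℂ) + 1) * ∑ i, (k i : ℂ) * (t i : ℂ))

/-- The generalized cosine `TC_k`. -/
noncomputable def TCos (d : ℕ) (k : Fin (d + 1) → ℤ) (t : Fin (d + 1) → ℝ) : ℂ :=
  (1 / (Nat.factorial (d + 1) : ℂ)) * ∑ σ : Equiv.Perm (Fin (d + 1)), phiH d (k ∘ σ) t

/-- The generalized sine `TS_k`. -/
noncomputable def TSin (d : ℕ) (k : Fin (d + 1) → ℤ) (t : Fin (d + 1) → ℝ) : ℂ :=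
  (1 / (Nat.factorial (d + 1) : ℂ)) * ∑ σ : Equiv.Perm (Fin (d + 1)),
    ((Equiv.Perm.sign σ : ℤ) : ℂ) * phiH d (k ∘ σ) t

/-- The special index `v° ∈ ℤ^{d+1}` with `v°_j = (d + 2 - 2j)(d+1)/2` (1-based `j`). -/
def vCirc (d : ℕ) : Fin (d + 1) → ℤ := fun i => ((d : ℤ) - 2 * (i : ℤ)) * ((d : ℤ) + 1) / 2

/-- The vertex index `v^k = ({d+1-k}^k, {-k}^{d+1-k})`. -/
def vK (d k : ℕ) : Fin (d + 1) → ℤ := fun i => if (i : ℕ) < k then (d : ℤ) + 1 - k else -(k : ℤ)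

/-!
Expanding the product and reindexing by `σ ↦ ρ * τ` gives
`TC_a · TS_b = (1/(d+1)!) ∑_ρ TS_{b + a∘ρ}`, and `TS_m` vanishes as soon as two coordinates
of `m` agree. For `a = v^k`, `b = v°`: a rearrangement `v^k∘ρ ≠ v^k` is not antitone, so it
has an ascent `-k < d+1-k` at adjacent positions `i, i+1`; since `v°_i = v°_{i+1} + (d+1)`,
the vector `v° + v^k∘ρ` has equal coordinates there. Only the `k!(d+1-k)!` permutations
stabilising `v^k` survive.
-/

open Equiv Finset

section Products

variable {d : ℕ}

lemma phiH_add (a b : Fin (d + 1) → ℤ) (t : Fin (d + 1) → ℝ) :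
    phiH d (a + b) t = phiH d a t * phiH d b t := by
  unfold phiH
  rw [← Complex.exp_add, ← mul_add, ← Finset.sum_add_distrib]
  push_cast [Pi.add_apply, add_mul]
  rfl

lemma TSin_eq_zero_of_apply_eq (m : Fin (d + 1) → ℤ) (t : Fin (d + 1) → ℝ)
    {i j : Fin (d + 1)} (hij : i ≠ j) (hm : m i = m j) : TSin d m t = 0 := by
  have hswap : m ∘ swap i j = m := by
    funext x
    rcases eq_or_ne x i with rfl | hxi
    · simp [hm]
    rcases eq_or_ne x j with rfl | hxj
    · simp [hm]
    · simp [swap_apply_of_ne_of_ne hxi hxj]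
  set f : Perm (Fin (d + 1)) → ℂ := fun σ => ((Perm.sign σ : ℤ) : ℂ) * phiH d (m ∘ σ) t
  have hanti : ∑ σ, f σ = -∑ σ, f σ := by
    calc ∑ σ, f σ = ∑ σ, f (swap i j * σ) :=
          (Equiv.sum_comp (Equiv.mulLeft (swap i j)) f).symm
      _ = ∑ σ, -f σ := Finset.sum_congr rfl fun σ _ => by
        simp only [f, Perm.coe_mul, ← Function.comp_assoc, hswap, Perm.sign_mul,
          Perm.sign_swap hij]
        push_cast
        ring
      _ = -∑ σ, f σ := Finset.sum_neg_distrib f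
  simp only [TSin]
  rw [show ∑ σ, f σ = 0 from self_eq_neg.mp hanti, mul_zero]

lemma TCos_mul_TSin (a b : Fin (d + 1) → ℤ) (t : Fin (d + 1) → ℝ) :
    TCos d a t * TSin d b t =
      1 / (Nat.factorial (d + 1) : ℂ) * ∑ ρ : Perm (Fin (d + 1)), TSin d (b + a ∘ ρ) t := by
  have hshift : ∀ τ : Perm (Fin (d + 1)),
      ∑ σ : Perm (Fin (d + 1)), phiH d (a ∘ σ) t * phiH d (b ∘ τ) t =
        ∑ ρ : Perm (Fin (d + 1)), phiH d ((b + a ∘ ρ) ∘ τ) t := by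
    intro τ
    rw [← Equiv.sum_comp (Equiv.mulRight τ)]
    refine Finset.sum_congr rfl fun ρ _ => ?_
    rw [mul_comm, ← phiH_add]
    rfl
  set c : ℂ := 1 / (Nat.factorial (d + 1) : ℂ)
  calc TCos d a t * TSin d b t
      = c * (c * ∑ τ : Perm (Fin (d + 1)), ((Perm.sign τ : ℤ) : ℂ) *
          ∑ σ : Perm (Fin (d + 1)), phiH d (a ∘ σ) t * phiH d (b ∘ τ) t) := by
        simp only [TCos, TSin, Finset.mul_sum, Finset.sum_mul]
        refine Finset.sum_congr rfl fun τ _ => Finset.sum_congr rfl fun σ _ => ?_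
        ring
    _ = c * ∑ ρ : Perm (Fin (d + 1)), TSin d (b + a ∘ ρ) t := by
        simp only [hshift, TSin, Finset.mul_sum]
        rw [Finset.sum_comm]

lemma sum_TSin_add_comp_perm_eq_card_mul (a b : Fin (d + 1) → ℤ) (t : Fin (d + 1) → ℝ)
    (hvanish : ∀ ρ : Perm (Fin (d + 1)), a ∘ ρ ≠ a → TSin d (b + a ∘ ρ) t = 0) :
    ∑ ρ : Perm (Fin (d + 1)), TSin d (b + a ∘ ρ) t =
      Fintype.card {ρ : Perm (Fin (d + 1)) // a ∘ ρ = a} * TSin d (b + a) t := by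
  rw [← Finset.sum_filter_add_sum_filter_not univ (fun ρ : Perm (Fin (d + 1)) => a ∘ ρ = a),
    Finset.sum_eq_zero fun ρ hρ => hvanish ρ (Finset.mem_filter.mp hρ).2, add_zero,
    Finset.sum_congr rfl fun ρ hρ => by rw [(Finset.mem_filter.mp hρ).2],
    Finset.sum_const, Fintype.card_subtype, nsmul_eq_mul]

end Products

lemma vCirc_castSucc (d : ℕ) (i : Fin d) :
    vCirc d i.castSucc = vCirc d i.succ + (d + 1) := by
  simp only [vCirc, Fin.val_castSucc, Fin.val_succ]
  rw [← Int.add_mul_ediv_right _ _ two_ne_zero]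
  congr 1
  push_cast
  ring

lemma vK_antitone (d k : ℕ) : Antitone (vK d k) := by
  intro i j hij
  simp only [vK]
  split_ifs <;> omega

lemma card_stabilizer_vK (d k : ℕ) (hk : k ≤ d + 1) :
    Fintype.card {ρ : Perm (Fin (d + 1)) // vK d k ∘ ρ = vK d k} =
      Nat.factorial k * Nat.factorial (d + 1 - k) := by
  set p : Fin (d + 1) → Bool := fun i => decide ((i : ℕ) < k)
  set g : Bool → ℤ := fun b => if b then (d : ℤ) + 1 - k else -(k : ℤ)
  have hg : Function.Injective g := by
    intro a b
    cases a <;> cases b <;> simp [g] <;> omega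
  have hfactor : vK d k = g ∘ p := funext fun i => by simp [vK, g, p]
  have hstab : ∀ ρ : Perm (Fin (d + 1)), vK d k ∘ ρ = vK d k ↔ p ∘ ρ = p := fun ρ => by
    rw [hfactor, Function.comp_assoc, hg.comp_left.eq_iff]
  have hlt : Fintype.card {i : Fin (d + 1) // (i : ℕ) < k} = k := Fintype.card_fin_lt_of_le hk
  rw [Fintype.card_congr (Equiv.subtypeEquivRight hstab), DomMulAct.stabilizer_card,
    Fintype.prod_bool]
  simp only [p, decide_eq_true_eq, decide_eq_false_iff_not, Fintype.card_subtype_compl, hlt,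
    Fintype.card_fin]

lemma TSin_vCirc_add_vK_comp_eq_zero (d k : ℕ) (t : Fin (d + 1) → ℝ)
    (ρ : Perm (Fin (d + 1))) (hρ : vK d k ∘ ρ ≠ vK d k) :
    TSin d (vCirc d + vK d k ∘ ρ) t = 0 := by
  have hnot : ¬ Antitone (vK d k ∘ ρ) := fun h =>
    hρ (Tuple.unique_antitone (τ := 1) h (vK_antitone d k))
  obtain ⟨i, hi⟩ : ∃ i : Fin d, vK d k (ρ i.castSucc) < vK d k (ρ i.succ) := by
    simpa [Fin.antitone_iff_succ_le] using hnot
  refine TSin_eq_zero_of_apply_eq _ t (Fin.castSucc_lt_succ (i := i)).ne ?_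
  simp only [Pi.add_apply, Function.comp_apply, vCirc_castSucc]
  simp only [vK] at hi ⊢
  split_ifs at hi ⊢ <;> omega

theorem zk_mul_TSin_vCirc_general (d k : ℕ) (hkd : k ≤ d)
    (t : Fin (d + 1) → ℝ) :
    TCos d (vK d k) t * TSin d (vCirc d) t =
      ((Nat.factorial k * Nat.factorial (d + 1 - k) : ℕ) : ℂ) /
          (Nat.factorial (d + 1) : ℂ) * TSin d (vCirc d + vK d k) t := by
  rw [TCos_mul_TSin, sum_TSin_add_comp_perm_eq_card_mul _ _ _
      (TSin_vCirc_add_vK_comp_eq_zero d k t), card_stabilizer_vK d k (by omega)]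
  ring

/-- `z_k TS_{v°} = (k!(d+1-k)!/(d+1)!) TS_{v° + v^k}`, where `z_k = TC_{v^k}`. -/
theorem zk_mul_TSin_vCirc (d k : ℕ) (hk1 : 1 ≤ k) (hkd : k ≤ d)
    (t : Fin (d + 1) → ℝ) (ht : ∑ i, t i = 0) :
    TCos d (vK d k) t * TSin d (vCirc d) t =
      ((Nat.factorial k * Nat.factorial (d + 1 - k) : ℕ) : ℂ) /
          (Nat.factorial (d + 1) : ℂ) * TSin d (vCirc d + vK d k) t :=
  zk_mul_TSin_vCirc_general d k hkd t
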